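/- Let 𝔪 be the 5-dimensional graded nilpotent Lie algebra with basis e₁,…,e₅, grading 𝔤₋₁=⟨e₁,e₂⟩, 𝔤₋₂=⟨e₃⟩, 𝔤₋₃=⟨e₄,e₅⟩, and nonzero brackets [e₁,e₂]=e₃, [e₁,e₃]=e₄, [e₂,e₃]=e₅. Then the symmetric bilinear form ⟨v,w⟩ = v₁w₅ + v₅w₁ − v₂w₄ − v₄w₂ + v₃w₃ satisfies, for every u ∈ 𝔪, ⟨Ad_{exp(u)}(v), Ad_{exp(u)}(w)⟩ = ⟨v,w⟩ for all v,w ∈ 𝔪. -/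
import Mathlib


/- The graded nilpotent Lie algebra 𝔪 ≅ ℝ⁵ with basis e₁,…,e₅ (indices 0,…,4),
   nonzero brackets [e₁,e₂]=e₃, [e₁,e₃]=e₄, [e₂,e₃]=e₅. -/

/-- The bracket of 𝔪 in coordinates. -/
noncomputable def mBr (u v : Fin 5 → ℝ) : Fin 5 → ℝ :=
  ![0, 0, u 0 * v 1 - u 1 * v 0, u 0 * v 2 - u 2 * v 0, u 1 * v 2 - u 2 * v 1]

/-- The invariant bilinear form ⟨v,w⟩ = v₁w₅ + v₅w₁ − v₂w₄ − v₄w₂ + v₃w₃. -/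
noncomputable def mForm (v w : Fin 5 → ℝ) : ℝ :=
  v 0 * w 4 + v 4 * w 0 - v 1 * w 3 - v 3 * w 1 + v 2 * w 2

/-- Ad_{exp u} = exp(ad_u); since 𝔪 has depth 3 the series terminates: ad_u³ = 0. -/
noncomputable def mAdExp (u v : Fin 5 → ℝ) : Fin 5 → ℝ :=
  v + mBr u v + (1/2 : ℝ) • mBr u (mBr u v) + (1/6 : ℝ) • mBr u (mBr u (mBr u v))

/-- For every u ∈ 𝔪, Ad_{exp(u)} preserves the bilinear form:
    ⟨Ad_{exp u}(v), Ad_{exp u}(w)⟩ = ⟨v,w⟩ for all v, w. -/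
theorem adExp_preserves_form :
    ∀ u v w : Fin 5 → ℝ, mForm (mAdExp u v) (mAdExp u w) = mForm v w := by
  intro u v w
  simp only [mForm, mAdExp, mBr, Pi.add_apply, Pi.smul_apply, smul_eq_mul,
    Matrix.cons_val_zero, Matrix.cons_val_one, Matrix.head_cons,
    Matrix.cons_val_two, Matrix.tail_cons, Matrix.cons_val_three,
    Matrix.cons_val_four]
  ring
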